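/- (Error Propagation Bound) Let D, Y, Z be discrete random variables on finite alphabets, and suppose there exists a random variable Y' with Y' ⊥ Z | D (conditional independence), H(Y'|D) ≤ H(Y|D), and P(Y ≠ Y') ≤ ε ≤ 1/2. Then H(Y|Z) ≤ H(Y|D) + ε·log|𝒴| + H₂(ε) + H(D|Z), where 𝒴 is the common alphabet of Y and Y'. -/

import Mathlib

/-!
Adjoin the unobserved `D` and `Y'` to `Y`: conditioning on `Z` only, `H(Y|Z) ≤ H(D, Y', Y | Z)`,
and the chain rule splits the right side into `H(D|Z) + H(Y'|D,Z) + H(Y|D,Y',Z)`. Conditional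
independence turns the middle term into `H(Y'|D) ≤ H(Y|D)`, and the last term is at most
`ε log |𝒴| + H₂(ε)` by Fano's inequality with `Y'` as the estimate of `Y`.
-/

/-- Conditional Shannon entropy `H(A|B)` computed from a joint pmf `p` on `A × B`
(convention `0 * log 0 = 0`, handled by `Real.log 0 = 0` and `0 / 0 = 0`). -/
noncomputable def condEnt {A B : Type*} [Fintype A] [Fintype B] (p : A → B → ℝ) : ℝ :=
  -∑ b, ∑ a, p a b * Real.log (p a b / (∑ a', p a' b))
/-- Binary entropy function `H₂`. -/
noncomputable def binEnt (e : ℝ) : ℝ := -(e * Real.log e) - (1 - e) * Real.log (1 - e)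

open Real Finset

lemma mul_log_div_nonpos {a b : ℝ} (ha : 0 ≤ a) (hab : a ≤ b) : a * log (a / b) ≤ 0 :=
  mul_nonpos_of_nonneg_of_nonpos ha <|
    log_nonpos (div_nonneg ha (ha.trans hab)) (div_le_one_of_le₀ hab (ha.trans hab))

lemma mul_log_div_eq_add {a b c : ℝ} (ha : 0 ≤ a) (hab : a ≤ b) (hbc : b ≤ c) :
    a * log (a / c) = a * log (b / c) + a * log (a / b) := by
  rcases ha.eq_or_lt with rfl | ha
  · simp
  have hb := ha.trans_le hab
  have hc := hb.trans_le hbc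
  rw [log_div ha.ne' hc.ne', log_div hb.ne' hc.ne', log_div ha.ne' hb.ne']
  ring

lemma sum_mul_log_le_sum_mul_log_div_sum {ι : Type*} [Fintype ι] {a r : ι → ℝ}
    (ha : ∀ i, 0 ≤ a i) (hr : ∀ i, 0 ≤ r i) (hr_pos : ∀ i, 0 < a i → 0 < r i)
    (hr_sum : ∑ i, r i ≤ 1) :
    ∑ i, a i * log (r i) ≤ ∑ i, a i * log (a i / ∑ j, a j) := by
  set m := ∑ j, a j
  have ham : ∀ i, a i ≤ m := fun i => single_le_sum (fun j _ => ha j) (mem_univ i)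
  -- `log x ≤ x - 1` at `x = r m / a`
  have hpoint : ∀ i, a i * log (r i) - a i * log (a i / m) ≤ m * r i - a i := by
    intro i
    rcases (ha i).eq_or_lt with h0 | h0
    · simpa [← h0] using mul_nonneg (sum_nonneg fun j _ => ha j) (hr i)
    have hm := h0.trans_le (ham i)
    have hri := hr_pos i h0
    have key := log_le_sub_one_of_pos (show 0 < r i * m / a i by positivity)
    rw [log_div (by positivity) h0.ne', log_mul hri.ne' hm.ne'] at key
    rw [log_div h0.ne' hm.ne']
    have hmul := mul_le_mul_of_nonneg_left key h0.le
    have hrhs : a i * (r i * m / a i - 1) = m * r i - a i := by field_simp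
    linarith
  have hsum := sum_le_sum fun i (_ : i ∈ univ) => hpoint i
  rw [sum_sub_distrib, sum_sub_distrib, ← mul_sum] at hsum
  nlinarith [mul_le_mul_of_nonneg_left hr_sum (sum_nonneg fun j (_ : j ∈ univ) => ha j)]

-- The left side is affine in `B` with slope `log N + log ((1 - ε) / ε) ≥ 0`,
-- and equals the right side at `B = ε`.
lemma neg_mul_log_add_mul_log_le_binEnt {B ε N : ℝ} (hB : 0 ≤ B) (hBε : B ≤ ε) (hε : ε ≤ 1 / 2)
    (hN : 1 ≤ N) :
    -((1 - B) * log (1 - ε) + B * log (ε / N)) ≤ ε * log N + binEnt ε := by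
  rcases (hB.trans hBε).eq_or_lt with rfl | hε0
  · simp [le_antisymm hBε hB, binEnt]
  have hlogN := log_nonneg hN
  have hlog : log ε ≤ log (1 - ε) := log_le_log hε0 (by linarith)
  rw [log_div hε0.ne' (by linarith), binEnt]
  nlinarith [mul_nonneg (sub_nonneg.2 hBε) (by linarith : 0 ≤ log N + log (1 - ε) - log ε)]

section condEnt

variable {A B C : Type*} [Fintype A] [Fintype B] [Fintype C]

lemma condEnt_nonneg {p : A → B → ℝ} (hp : ∀ a b, 0 ≤ p a b) : 0 ≤ condEnt p := by
  rw [condEnt, neg_nonneg]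
  exact sum_nonpos fun b _ => sum_nonpos fun a _ =>
    mul_log_div_nonpos (hp a b) (single_le_sum (fun a' _ => hp a' b) (mem_univ a))

lemma condEnt_comp_equiv {A' : Type*} [Fintype A'] (e : A ≃ A') (p : A' → B → ℝ) :
    condEnt (fun a b => p (e a) b) = condEnt p := by
  unfold condEnt
  congr 1
  refine sum_congr rfl fun b _ => ?_
  rw [e.sum_comp (fun a => p a b)]
  exact e.sum_comp (fun a => p a b * log (p a b / ∑ a', p a' b))

/-- Chain rule: `H(A, C | B) = H(A | B) + H(C | A, B)`. -/
lemma condEnt_prod_eq_add {p : A → C → B → ℝ} (hp : ∀ a c b, 0 ≤ p a c b) :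
    condEnt (fun (x : A × C) b => p x.1 x.2 b) =
      condEnt (fun a b => ∑ c, p a c b) + condEnt (fun c (x : A × B) => p x.1 c x.2) := by
  simp only [condEnt, Fintype.sum_prod_type]
  rw [sum_comm (s := univ (α := A)) (t := univ (α := B)), ← neg_add, ← sum_add_distrib]
  congr 1
  refine sum_congr rfl fun b _ => ?_
  rw [← sum_add_distrib]
  refine sum_congr rfl fun a _ => ?_
  rw [sum_mul, ← sum_add_distrib]
  refine sum_congr rfl fun c _ => ?_
  have hpsum : ∀ a, 0 ≤ ∑ c, p a c b := fun a => sum_nonneg fun c _ => hp a c b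
  exact mul_log_div_eq_add (hp a c b) (single_le_sum (fun c' _ => hp a c' b) (mem_univ c))
    (single_le_sum (fun a' _ => hpsum a') (mem_univ a))

lemma condEnt_le_condEnt_prod {p : A → C → B → ℝ} (hp : ∀ a c b, 0 ≤ p a c b) :
    condEnt (fun a b => ∑ c, p a c b) ≤ condEnt (fun (x : A × C) b => p x.1 x.2 b) := by
  rw [condEnt_prod_eq_add hp]
  exact le_add_of_nonneg_right (condEnt_nonneg fun c x => hp x.1 c x.2)

lemma condEnt_prod_eq_of_condIndep {p : A → C → B → ℝ} (hp : ∀ a c b, 0 ≤ p a c b)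
    (hci : ∀ a c b, (∑ c', ∑ b', p a c' b') * p a c b = (∑ b', p a c b') * (∑ c', p a c' b)) :
    condEnt (fun c (x : A × B) => p x.1 c x.2) = condEnt (fun c a => ∑ b, p a c b) := by
  simp only [condEnt, Fintype.sum_prod_type]
  congr 1
  refine sum_congr rfl fun a _ => ?_
  rw [sum_comm]
  refine sum_congr rfl fun c _ => ?_
  rw [sum_mul]
  refine sum_congr rfl fun b _ => ?_
  rcases (hp a c b).eq_or_lt with h0 | h0
  · simp [← h0]
  have hAB : 0 < ∑ c', p a c' b :=
    h0.trans_le (single_le_sum (fun c' _ => hp a c' b) (mem_univ c))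
  have hAC : 0 < ∑ b', p a c b' :=
    h0.trans_le (single_le_sum (fun b' _ => hp a c b') (mem_univ b))
  have hA : 0 < ∑ c', ∑ b', p a c' b' :=
    hAC.trans_le (single_le_sum (fun c' _ => sum_nonneg fun b' _ => hp a c' b') (mem_univ c))
  have hratio : p a c b / ∑ c', p a c' b = (∑ b', p a c b') / ∑ c', ∑ b', p a c' b' := by
    rw [div_eq_div_iff hAB.ne' hA.ne']
    linarith [hci a c b]
  rw [hratio]

/-- **Fano's inequality** for the estimator `g`. -/
theorem condEnt_le_mul_log_card_add_binEnt {X : Type*} [Fintype X] [DecidableEq A]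
    {p : A → X → ℝ}
    (hp : ∀ a x, 0 ≤ p a x) (hp_sum : ∑ x, ∑ a, p a x = 1) (g : X → A) {ε : ℝ}
    (hε : ε ≤ 1 / 2) (herr : ∑ x, ∑ a, (if a = g x then 0 else p a x) ≤ ε) :
    condEnt p ≤ ε * log (Fintype.card A) + binEnt ε := by
  set err : A → X → ℝ := fun a x => if a = g x then 0 else p a x
  have herr_nonneg : ∀ a x, 0 ≤ err a x := fun a x => by
    simp only [err]; split_ifs <;> simp [hp]
  have herr_le : ∀ a x, err a x ≤ ε := fun a x =>
    (single_le_sum (fun a' _ => herr_nonneg a' x) (mem_univ a)).trans <|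
      (single_le_sum (fun x' _ => sum_nonneg fun a' _ => herr_nonneg a' x') (mem_univ x)).trans herr
  have hε0 : 0 ≤ ε := (sum_nonneg fun x _ => sum_nonneg fun a _ => herr_nonneg a x).trans herr
  have hA : Nonempty A := by
    rcases isEmpty_or_nonempty A with hA | hA
    · simp at hp_sum
    · exact hA
  set N : ℝ := (Fintype.card A : ℝ)
  have hN : 1 ≤ N := Nat.one_le_cast.mpr Fintype.card_pos
  -- Reference distribution for Gibbs' inequality: mass `1 - ε` on the guess, `ε / N` elsewhere.
  set r : A → X → ℝ := fun a x => if a = g x then 1 - ε else ε / N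
  have hr : ∀ a x, 0 ≤ r a x := fun a x => by
    simp only [r]; split_ifs
    · linarith
    · positivity
  have hr_pos : ∀ a x, 0 < p a x → 0 < r a x := fun a x hpx => by
    simp only [r]; split_ifs with h
    · linarith
    · have : p a x ≤ ε := by simpa [err, h] using herr_le a x
      exact div_pos (hpx.trans_le this) (by linarith)
  have hr_sum : ∀ x, ∑ a, r a x ≤ 1 := fun x =>
    calc ∑ a, r a x ≤ ∑ a, (ε / N + if a = g x then 1 - ε else 0) :=
          sum_le_sum fun a _ => by
            simp only [r]; split_ifs <;> linarith [div_nonneg hε0 (by linarith : (0 : ℝ) ≤ N)]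
      _ = 1 := by
          rw [sum_add_distrib, sum_const, card_univ, nsmul_eq_mul, sum_ite_eq' univ (g x),
            if_pos (mem_univ _), mul_div_cancel₀ _ (by positivity : N ≠ 0)]
          ring
  have hlog_r : ∀ a x, p a x * log (r a x) =
      p a x * log (1 - ε) + err a x * (log (ε / N) - log (1 - ε)) := fun a x => by
    simp only [r, err]; split_ifs <;> ring
  calc condEnt p ≤ -∑ x, ∑ a, p a x * log (r a x) :=
        neg_le_neg <| sum_le_sum fun x _ =>
          sum_mul_log_le_sum_mul_log_div_sum (fun a => hp a x) (fun a => hr a x)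
            (fun a => hr_pos a x) (hr_sum x)
    _ = -((1 - ∑ x, ∑ a, err a x) * log (1 - ε) + (∑ x, ∑ a, err a x) * log (ε / N)) := by
        simp only [hlog_r, sum_add_distrib, ← sum_mul, hp_sum]
        ring
    _ ≤ ε * log N + binEnt ε :=
        neg_mul_log_add_mul_log_le_binEnt
          (sum_nonneg fun x _ => sum_nonneg fun a _ => herr_nonneg a x) herr hε hN

end condEnt

lemma sum_prod_prod_sum_eq {α β γ δ M : Type*} [Fintype α] [Fintype β] [Fintype γ] [Fintype δ]
    [AddCommMonoid M] (f : α → β → γ → δ → M) :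
    ∑ x : (α × γ) × δ, ∑ b, f x.1.1 b x.1.2 x.2 = ∑ a, ∑ b, ∑ c, ∑ d, f a b c d := by
  simp only [Fintype.sum_prod_type]
  exact sum_congr rfl fun a _ => (sum_congr rfl fun c _ => sum_comm).trans sum_comm

/-- Error Propagation Bound (Theorem 3): if there is `Y'` with `Y' ⊥ Z | D`,
`H(Y'|D) ≤ H(Y|D)` and `P(Y ≠ Y') ≤ ε ≤ 1/2`, then
`H(Y|Z) ≤ H(Y|D) + ε·log|𝒴| + H₂(ε) + H(D|Z)`.
The joint pmf `q d y y' z` describes `(D, Y, Y', Z)`. -/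
theorem error_propagation_bound
    {𝒟 𝒴 𝒵 : Type*} [Fintype 𝒟] [Fintype 𝒴] [Fintype 𝒵] [DecidableEq 𝒴]
    (q : 𝒟 → 𝒴 → 𝒴 → 𝒵 → ℝ) (hq : ∀ d y y' z, 0 ≤ q d y y' z)
    (hsum : ∑ d, ∑ y, ∑ y', ∑ z, q d y y' z = 1)
    (ε : ℝ) (hε : ε ≤ 1 / 2)
    (hci : ∀ d y' z,
      (∑ y'', ∑ z', ∑ y, q d y y'' z') * (∑ y, q d y y' z) =
        (∑ z', ∑ y, q d y y' z') * (∑ y'', ∑ y, q d y y'' z))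
    (hent : condEnt (fun y' d => ∑ y, ∑ z, q d y y' z) ≤
        condEnt (fun y d => ∑ y', ∑ z, q d y y' z))
    (herr : ∑ d, ∑ y, ∑ y', ∑ z, (if y = y' then 0 else q d y y' z) ≤ ε) :
    condEnt (fun y z => ∑ d, ∑ y', q d y y' z) ≤
      condEnt (fun y d => ∑ y', ∑ z, q d y y' z) +
        ε * Real.log (Fintype.card 𝒴) + binEnt ε +
        condEnt (fun d z => ∑ y, ∑ y', q d y y' z) := by
  have hm : ∀ d y' z, 0 ≤ ∑ y, q d y y' z := fun d y' z => sum_nonneg fun y _ => hq d y y' z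
  have hfano := condEnt_le_mul_log_card_add_binEnt
    (p := fun y (x : (𝒟 × 𝒴) × 𝒵) => q x.1.1 y x.1.2 x.2) (fun _ _ => hq _ _ _ _)
    ((sum_prod_prod_sum_eq q).trans hsum) (fun x => x.1.2) hε
    ((sum_prod_prod_sum_eq fun d y y' z => if y = y' then 0 else q d y y' z).trans_le herr)
  have hDZ : condEnt (fun d z => ∑ y', ∑ y, q d y y' z) =
      condEnt (fun d z => ∑ y, ∑ y', q d y y' z) := congrArg condEnt (funext₂ fun _ _ => sum_comm)
  have hY'D : condEnt (fun y' d => ∑ z, ∑ y, q d y y' z) =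
      condEnt (fun y' d => ∑ y, ∑ z, q d y y' z) := congrArg condEnt (funext₂ fun _ _ => sum_comm)
  calc condEnt (fun y z => ∑ d, ∑ y', q d y y' z)
      = condEnt (fun y z => ∑ x : 𝒟 × 𝒴, q x.1 y x.2 z) := by simp only [Fintype.sum_prod_type]
    _ ≤ condEnt (fun (w : 𝒴 × (𝒟 × 𝒴)) z => q w.2.1 w.1 w.2.2 z) :=
        condEnt_le_condEnt_prod fun y x z => hq x.1 y x.2 z
    _ = condEnt (fun (w : (𝒟 × 𝒴) × 𝒴) z => q w.1.1 w.2 w.1.2 z) :=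
        condEnt_comp_equiv (Equiv.prodComm 𝒴 (𝒟 × 𝒴))
          fun (w : (𝒟 × 𝒴) × 𝒴) z => q w.1.1 w.2 w.1.2 z
    _ = condEnt (fun d z => ∑ y', ∑ y, q d y y' z) +
          condEnt (fun y' (x : 𝒟 × 𝒵) => ∑ y, q x.1 y y' x.2) +
          condEnt (fun y (x : (𝒟 × 𝒴) × 𝒵) => q x.1.1 y x.1.2 x.2) := by
        rw [condEnt_prod_eq_add (p := fun (x : 𝒟 × 𝒴) y z => q x.1 y x.2 z)
          (fun _ _ _ => hq _ _ _ _), condEnt_prod_eq_add hm]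
    _ ≤ _ := by
        rw [condEnt_prod_eq_of_condIndep hm hci, hDZ, hY'D]
        linarith
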